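/- Let x_1, ..., x_n be real numbers such that every subset of size greater than k has negative sum, and suppose exactly one x_i is nonnegative. Then every nonempty subset with nonnegative sum contains that element and has size at most k, so the number of nonnegative-sum subsets is at most C(n-1,k-1) + ... + C(n-1,0) + 1. -/

import Mathlib

/-!
Every entry other than `x i₀` is negative, so a nonempty set avoiding `i₀` has negative sum;
hence a nonempty nonnegative-sum set is `insert i₀ T` with `#T < k`, and sets of this form
are counted by `∑ j < k, C(n - 1, j)`. The extra `1` is the empty set.
-/

open Finset

theorem Finset.card_filter_powerset_card_lt {α : Type*} (s : Finset α) (k : ℕ) :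
    #{t ∈ s.powerset | #t < k} = ∑ j ∈ range k, (#s).choose j := by
  rw [card_eq_sum_card_fiberwise fun t ht => mem_range.2 (mem_filter.1 ht).2]
  refine sum_congr rfl fun j hj => ?_
  rw [← card_powersetCard, powersetCard_eq_filter, filter_filter]
  exact congrArg card <| filter_congr fun t _ =>
    ⟨And.right, by rintro rfl; exact ⟨mem_range.1 hj, rfl⟩⟩

theorem Finset.card_filter_mem_card_le {ι : Type*} [Fintype ι] [DecidableEq ι] (a : ι) (k : ℕ) :
    #{s : Finset ι | a ∈ s ∧ #s ≤ k} = ∑ j ∈ range k, (Fintype.card ι - 1).choose j := by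
  rw [← card_univ, ← card_erase_of_mem (mem_univ a), ← card_filter_powerset_card_lt]
  refine card_nbij' (erase · a) (insert a) ?_ ?_ ?_ ?_
  · intro s hs
    simp only [coe_filter, Set.mem_ofPred_eq, mem_univ, true_and, mem_powerset] at hs ⊢
    refine ⟨erase_subset_erase a (subset_univ s), ?_⟩
    have := card_pos.2 ⟨a, hs.1⟩
    rw [card_erase_of_mem hs.1]
    omega
  · intro t ht
    simp only [coe_filter, Set.mem_ofPred_eq, mem_univ, true_and, mem_powerset] at ht ⊢
    exact ⟨mem_insert_self a t, (card_insert_le a t).trans ht.2⟩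
  · intro s hs
    simp only [coe_filter, Set.mem_ofPred_eq, mem_univ, true_and] at hs
    exact insert_erase hs.1
  · intro t ht
    simp only [coe_filter, Set.mem_ofPred_eq, mem_powerset] at ht
    exact erase_insert fun h => by simpa using ht.1 h

theorem Finset.mem_of_sum_nonneg {ι M : Type*} [AddCommMonoid M] [LinearOrder M]
    [IsOrderedCancelAddMonoid M] {f : ι → M} {a : ι} (hf : ∀ i, 0 ≤ f i → i = a)
    {s : Finset ι} (hs : s.Nonempty) (hsum : 0 ≤ ∑ i ∈ s, f i) : a ∈ s := by
  by_contra ha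
  refine (sum_neg (fun i hi => ?_) hs).not_ge hsum
  exact not_le.1 fun hi' => ha (hf i hi' ▸ hi)

theorem stmt_19_general (n k : ℕ) (x : Fin n → ℝ)
    (h : ∀ S : Finset (Fin n), k < S.card → ∑ i ∈ S, x i < 0)
    (i₀ : Fin n) (huniq : ∀ j, 0 ≤ x j → j = i₀) :
    (∀ S : Finset (Fin n), S.Nonempty → 0 ≤ ∑ i ∈ S, x i → i₀ ∈ S ∧ S.card ≤ k) ∧
      (Finset.univ.filter (fun S : Finset (Fin n) => 0 ≤ ∑ i ∈ S, x i)).card ≤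
        (∑ i ∈ Finset.range k, (n - 1).choose i) + 1 := by
  have hmain : ∀ S : Finset (Fin n), S.Nonempty → 0 ≤ ∑ i ∈ S, x i → i₀ ∈ S ∧ S.card ≤ k :=
    fun S hS hsum => ⟨mem_of_sum_nonneg huniq hS hsum, not_lt.1 fun hk => (h S hk).not_ge hsum⟩
  refine ⟨hmain, ?_⟩
  have hsub : ({S | 0 ≤ ∑ i ∈ S, x i} : Finset (Finset (Fin n))) ⊆
      insert ∅ ({S | i₀ ∈ S ∧ #S ≤ k} : Finset (Finset (Fin n))) := by
    intro S hS
    rcases S.eq_empty_or_nonempty with rfl | hne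
    · exact mem_insert_self _ _
    · exact mem_insert_of_mem (mem_filter.2 ⟨mem_univ S, hmain S hne (mem_filter.1 hS).2⟩)
  calc _ ≤ _ := card_le_card hsub
    _ ≤ _ := card_insert_le _ _
    _ = _ := by rw [card_filter_mem_card_le, Fintype.card_fin]

theorem stmt_19 (n k : ℕ) (x : Fin n → ℝ)
    (h : ∀ S : Finset (Fin n), k < S.card → ∑ i ∈ S, x i < 0)
    (i₀ : Fin n) (hi₀ : 0 ≤ x i₀) (huniq : ∀ j, 0 ≤ x j → j = i₀) :
    (∀ S : Finset (Fin n), S.Nonempty → 0 ≤ ∑ i ∈ S, x i → i₀ ∈ S ∧ S.card ≤ k) ∧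
      (Finset.univ.filter (fun S : Finset (Fin n) => 0 ≤ ∑ i ∈ S, x i)).card ≤
        (∑ i ∈ Finset.range k, (n - 1).choose i) + 1 :=
  stmt_19_general n k x h i₀ huniq
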